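/- Let T = T_{(G,H,S)} be a KV-trellis of C with state matrices N_j, j = 0,...,n−1. Then the intersection of the row spaces of all N_j is zero: ⋂_{j=0}^{n−1} im N_j = {0}. -/

import Mathlib

open scoped Classical

def circIoc {n : ℕ} (a b : ZMod n) : Set (ZMod n) :=
  {x | 1 ≤ (x - a).val ∧ (x - a).val ≤ (b - a).val}

def circIcc {n : ℕ} (a b : ZMod n) : Set (ZMod n) :=
  {x | (x - a).val ≤ (b - a).val}

def IsSpan {n : ℕ} {F : Type*} [Field F] (c : ZMod n → F) (a b : ZMod n) : Prop :=
  c a ≠ 0 ∧ c b ≠ 0 ∧ ∀ j, c j ≠ 0 → j ∈ circIcc a b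

/-!
Row `l` of `N j` is the syndrome under `H` of the part of the `l`-th row of `G` lying in the
circular window `[a l, j)`; it vanishes unless `j ∈ (a l, b l]`. Minimality of the characteristic
spans makes the rows of `N j` whose span has `j` in its interior, together with the column `H_j`,
linearly independent. So if `w = ∑ₗ c j l • N j l` for every `j`, with `c j` supported on the rows
active at `j`, comparing the representations at `j` and `j + 1` shows that `c j l` is a constant
`μ l` along the span of row `l` and that `μ ᵥ* G = 0`. As `G` has full row rank, `μ = 0`, hence
`w = 0`.
-/
namespace ZMod

variable {n : ℕ} [NeZero n]

lemma val_add_one_eq (x : ZMod n) : (x + 1).val = (x.val + 1) % n := by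
  rw [← ZMod.val_natCast, Nat.cast_add_one, ZMod.natCast_zmod_val]

lemma val_sub_of_lt {x y : ZMod n} (h : x.val < y.val) : (x - y).val = n + x.val - y.val := by
  have hyx : (y - x).val = y.val - x.val := ZMod.val_sub h.le
  have hne : y - x ≠ 0 := fun h0 => by rw [h0, ZMod.val_zero] at hyx; omega
  rw [← neg_sub, ZMod.neg_val, if_neg hne, hyx]
  have := ZMod.val_lt y
  omega

end ZMod

lemma right_mem_circIoc {n : ℕ} {a b : ZMod n} (h : a ≠ b) : b ∈ circIoc a b := by
  refine ⟨Nat.one_le_iff_ne_zero.2 fun h0 => h ?_, le_rfl⟩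
  rwa [ZMod.val_eq_zero, sub_eq_zero, eq_comm] at h0

section Circular

variable {n : ℕ} [NeZero n]

def circIco (a b : ZMod n) : Set (ZMod n) :=
  {x | (x - a).val < (b - a).val}

lemma mem_circIco_iff {a j t : ZMod n} :
    t ∈ circIco a j ↔ t ≠ j ∧ (j - t).val ≤ (j - a).val := by
  have hjt : j - t = (j - a) - (t - a) := by ring
  have hne : t ≠ j ↔ (t - a).val ≠ (j - a).val := by
    rw [Ne, Ne, (ZMod.val_injective n).eq_iff, sub_left_inj]
  simp only [circIco, Set.mem_ofPred_eq, hne, hjt]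
  rcases le_or_gt (t - a).val (j - a).val with h | h
  · rw [ZMod.val_sub h]; omega
  · rw [ZMod.val_sub_of_lt h]; have := ZMod.val_lt (t - a); omega

lemma circIco_subset_circIco {a a' j : ZMod n} (h : (j - a).val ≤ (j - a').val) :
    circIco a j ⊆ circIco a' j := fun _ ht =>
  mem_circIco_iff.2 ⟨(mem_circIco_iff.1 ht).1, (mem_circIco_iff.1 ht).2.trans h⟩

lemma mem_circIco_or_eq_iff {a j t : ZMod n} :
    t ∈ circIco a j ∨ t = j ↔ t ∈ circIco a (j + 1) ∨ j + 1 = a := by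
  have hsucc : j + 1 - a = (j - a) + 1 := by ring
  have heq : t = j ↔ (t - a).val = (j - a).val := by
    rw [(ZMod.val_injective n).eq_iff, sub_left_inj]
  have hwrap : j + 1 = a ↔ (j - a).val + 1 = n := by
    rw [← sub_eq_zero, hsucc, ← ZMod.val_eq_zero, ZMod.val_add_one_eq]
    have := ZMod.val_lt (j - a)
    constructor
    · intro h
      by_contra hne
      rw [Nat.mod_eq_of_lt (by omega)] at h
      omega
    · intro h; rw [h, Nat.mod_self]
  simp only [circIco, Set.mem_ofPred_eq, heq, hwrap, hsucc, ZMod.val_add_one_eq]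
  have := ZMod.val_lt (t - a)
  have := ZMod.val_lt (j - a)
  by_cases hw : (j - a).val + 1 = n
  · simp only [hw, Nat.mod_self, or_true, iff_true]; omega
  · rw [Nat.mod_eq_of_lt (by omega)]; omega

lemma mem_circIco_zero {a t : ZMod n} (ha : a ≠ 0) : t ∈ circIco a 0 ↔ a.val ≤ t.val := by
  have hneg : (0 - a).val = n - a.val := by rw [zero_sub, ZMod.neg_val, if_neg ha]
  simp only [circIco, Set.mem_ofPred_eq, hneg]
  have := ZMod.val_lt t
  have : a.val ≠ 0 := (ZMod.val_ne_zero a).2 ha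
  rcases le_or_gt a.val t.val with h | h
  · rw [ZMod.val_sub h]; omega
  · rw [ZMod.val_sub_of_lt h]; omega

lemma add_one_notMem_circIoc (a b : ZMod n) : b + 1 ∉ circIoc a b := by
  have hsucc : b + 1 - a = (b - a) + 1 := by ring
  simp only [circIoc, Set.mem_ofPred_eq, hsucc, ZMod.val_add_one_eq]
  have := ZMod.val_lt (b - a)
  by_cases hw : (b - a).val + 1 = n
  · rw [hw, Nat.mod_self]; omega
  · rw [Nat.mod_eq_of_lt (by omega)]; omega

lemma add_one_mem_circIoc {a b t : ZMod n} (ht : t ∈ circIcc a b) (hne : t ≠ b) :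
    t + 1 ∈ circIoc a b := by
  have hsucc : t + 1 - a = (t - a) + 1 := by ring
  have hval : (t - a).val ≠ (b - a).val := by
    rwa [Ne, (ZMod.val_injective n).eq_iff, sub_left_inj]
  have := ZMod.val_lt (b - a)
  simp only [circIcc, Set.mem_ofPred_eq] at ht
  have hlt : (t - a).val + 1 < n := by omega
  simp only [circIoc, Set.mem_ofPred_eq, hsucc, ZMod.val_add_one_eq, Nat.mod_eq_of_lt hlt]
  omega

lemma apply_eq_of_mem_circIoc {α : Type*} {a b j : ZMod n} (f : ZMod n → α)
    (hf : ∀ i ∈ circIoc a b, i ≠ b → f (i + 1) = f i) (hj : j ∈ circIoc a b) :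
    f j = f (a + 1) := by
  have hlt := ZMod.val_lt (b - a)
  have key : ∀ d : ℕ, d < (b - a).val → f (a + ((d + 1 : ℕ) : ZMod n)) = f (a + 1) := by
    intro d
    induction d with
    | zero => simp
    | succ d ih =>
      intro hd
      have hval : (a + ((d + 1 : ℕ) : ZMod n) - a).val = d + 1 := by
        rw [add_sub_cancel_left, ZMod.val_natCast, Nat.mod_eq_of_lt (by omega)]
      have hmem : a + ((d + 1 : ℕ) : ZMod n) ∈ circIoc a b := by
        simp only [circIoc, Set.mem_ofPred_eq, hval]; omega
      have hne : a + ((d + 1 : ℕ) : ZMod n) ≠ b := fun h => by rw [h] at hval; omega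
      rw [← ih (by omega), ← hf _ hmem hne]
      push_cast; ring_nf
  obtain ⟨h1, h2⟩ := hj
  have hj' : a + (((j - a).val - 1 + 1 : ℕ) : ZMod n) = j := by
    rw [Nat.sub_add_cancel h1, ZMod.natCast_zmod_val, add_sub_cancel]
  rw [← key ((j - a).val - 1) (by omega), hj']

end Circular

section Trellis

open Matrix

variable {F : Type*} [Field F] {n k m : ℕ} [NeZero n]

def IsShortestSpanFrom (H : Matrix (Fin m) (ZMod n) F) (a₀ b₀ : ZMod n) : Prop :=
  ∀ c : ZMod n → F, (∀ i, ∑ j, c j * H i j = 0) → c ≠ 0 →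
    ∀ b', IsSpan c a₀ b' → (b₀ - a₀).val ≤ (b' - a₀).val

lemma sub_val_le_of_mulVec_eq_zero {H : Matrix (Fin m) (ZMod n) F} {a₀ b₀ : ZMod n}
    (hmin : IsShortestSpanFrom H a₀ b₀) {c : ZMod n → F} (hc : H *ᵥ c = 0) (hca : c a₀ ≠ 0)
    {d : ℕ} (hd : ∀ t, c t ≠ 0 → (t - a₀).val ≤ d) : (b₀ - a₀).val ≤ d := by
  obtain ⟨b', hb', hmax⟩ := Finset.exists_max_image (Finset.univ.filter (c · ≠ 0))
    (fun t => (t - a₀).val) ⟨a₀, by simpa using hca⟩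
  have hker : ∀ i, ∑ j, c j * H i j = 0 := fun i => by
    simpa [mulVec, dotProduct, mul_comm] using congrFun hc i
  have hspan : IsSpan c a₀ b' :=
    ⟨hca, by simpa using hb', fun t ht => hmax t (by simpa using ht)⟩
  exact (hmin c hker (fun h => hca (by simp [h])) b' hspan).trans (hd b' (by simpa using hb'))

lemma ne_of_isSpan_of_mulVec_eq_zero {H : Matrix (Fin m) (ZMod n) F} {c : ZMod n → F}
    {a b : ZMod n} (hspan : IsSpan c a b) (hc : H *ᵥ c = 0) (hH : ∀ j, ∃ i, H i j ≠ 0) :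
    a ≠ b := by
  rintro rfl
  have hsingle : c = Pi.single a (c a) := by
    ext t
    by_cases hta : t = a
    · simp [hta]
    · rw [Pi.single_eq_of_ne hta]
      by_contra hct
      have : (t - a).val ≤ (a - a).val := hspan.2.2 t hct
      rw [sub_self, ZMod.val_zero, Nat.le_zero, ZMod.val_eq_zero, sub_eq_zero] at this
      exact hta this
  obtain ⟨i, hi⟩ := hH a
  have := congrFun hc i
  rw [hsingle, mulVec_single] at this
  simp only [Pi.smul_apply, MulOpposite.smul_eq_mul_unop, MulOpposite.unop_op, col_apply,
    Pi.zero_apply, mul_eq_zero] at this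
  exact this.elim hi hspan.1

lemma Matrix.linearIndependent_rows_of_rank_eq_card {ι κ : Type*} [Fintype ι] [Fintype κ]
    {A : Matrix ι κ F} (h : A.rank = Fintype.card ι) : LinearIndependent F A.row :=
  linearIndependent_iff_card_eq_finrank_span.2 <| by
    rw [Set.finrank, ← A.rank_eq_finrank_span_row, h]

variable (G : Matrix (Fin k) (ZMod n) F) (H : Matrix (Fin m) (ZMod n) F) (a b : Fin k → ZMod n)

noncomputable def bcjrState (j : ZMod n) : Matrix (Fin k) (Fin m) F :=
  Matrix.of fun l => H *ᵥ (circIco (a l) j).indicator (G l)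

variable {G H a b}

lemma mulVec_row_eq_zero (hGH : G * Hᵀ = 0) (l : Fin k) : H *ᵥ G l = 0 := by
  ext i
  simpa [Matrix.mul_apply, mulVec, dotProduct, mul_comm] using congrFun (congrFun hGH l) i

lemma indicator_circIco_add_single (g : ZMod n → F) (a₀ j : ZMod n) :
    (circIco a₀ j).indicator g + Pi.single j (g j) =
      (circIco a₀ (j + 1)).indicator g + if j + 1 = a₀ then g else 0 := by
  ext t
  have hiff := @mem_circIco_or_eq_iff n _ a₀ j t
  have hj : j ∉ circIco a₀ j := by simp [circIco]
  by_cases htj : t = j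
  · subst htj
    by_cases hw : t + 1 = a₀
    · subst hw; simp [circIco]
    · simp_all
  · by_cases hw : j + 1 = a₀
    · subst hw; simp_all [circIco]
    · simp_all [Set.indicator_apply]

lemma bcjrState_apply (j : ZMod n) (l : Fin k) :
    bcjrState G H a j l = H *ᵥ (circIco (a l) j).indicator (G l) := rfl

lemma bcjrState_add_one_apply (hGH : G * Hᵀ = 0) (j : ZMod n) (l : Fin k) :
    bcjrState G H a (j + 1) l = bcjrState G H a j l + G l j • H.col j := by
  have h := congrArg (H *ᵥ ·) (indicator_circIco_add_single (G l) (a l) j)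
  simp only [mulVec_add, mulVec_single] at h
  ext c
  have hc := congrFun h c
  split_ifs at hc <;>
    simp_all [bcjrState, mulVec_row_eq_zero hGH]

lemma bcjrState_zero (hGH : G * Hᵀ = 0) (l : Fin k) (c : Fin m) :
    bcjrState G H a 0 l c =
      ∑ j ∈ Finset.univ.filter (fun j : ZMod n => (a l).val ≤ j.val), G l j * H c j := by
  by_cases ha : a l = 0
  · have hfull : ∑ j, G l j * H c j = 0 := by
      simpa [mulVec, dotProduct, mul_comm] using congrFun (mulVec_row_eq_zero hGH l) c
    simp [bcjrState, ha, circIco, hfull, ← Pi.zero_def]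
  · simp [bcjrState, mulVec, dotProduct, Set.indicator_apply, mem_circIco_zero ha,
      Finset.sum_filter, mul_comm]

lemma bcjrState_eq (hGH : G * Hᵀ = 0) {N : ZMod n → Matrix (Fin k) (Fin m) F}
    (hN0 : ∀ l c, N 0 l c =
      ∑ j ∈ Finset.univ.filter (fun j : ZMod n => (a l).val ≤ j.val), G l j * H c j)
    (hNrec : ∀ j : ZMod n, N (j + 1) = N j + Matrix.of (fun l c => G l j * H c j)) :
    N = bcjrState G H a := by
  have hnat : ∀ v : ℕ, N v = bcjrState G H a v := by
    intro v
    induction v with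
    | zero => ext l c; simp [hN0, bcjrState_zero hGH]
    | succ v ih =>
      ext l c
      simp [hNrec, ih, bcjrState_add_one_apply hGH]
  funext j
  simpa using hnat j.val

lemma bcjrState_row_eq_zero (hGH : G * Hᵀ = 0) {l : Fin k} (hspan : IsSpan (G l) (a l) (b l))
    {j : ZMod n} (hj : j ∉ circIoc (a l) (b l)) : bcjrState G H a j l = 0 := by
  simp only [circIoc, Set.mem_ofPred_eq, not_and_or, not_le, Nat.lt_one_iff] at hj
  rcases hj with h0 | hlt
  · simp [bcjrState_apply, circIco, h0, ← Pi.zero_def]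
  · have hfull : (circIco (a l) j).indicator (G l) = G l := by
      refine Set.indicator_eq_self.2 fun t ht => ?_
      exact (hspan.2.2 t ht).trans_lt hlt
    rw [bcjrState_apply, hfull, mulVec_row_eq_zero hGH]

lemma bcjrState_row_end (hGH : G * Hᵀ = 0) {l : Fin k} (hspan : IsSpan (G l) (a l) (b l)) :
    bcjrState G H a (b l) l = -G l (b l) • H.col (b l) := by
  have h := bcjrState_add_one_apply (a := a) hGH (b l) l
  rw [bcjrState_row_eq_zero hGH hspan (add_one_notMem_circIoc _ _)] at h
  rw [neg_smul, eq_neg_iff_add_eq_zero, ← h]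

lemma eq_zero_of_sum_smul_bcjrState_add_smul_eq_zero (hspan : ∀ l, IsSpan (G l) (a l) (b l))
    (ha : Function.Injective a)
    (hchar : ∀ l, IsShortestSpanFrom H (a l) (b l))
    (hH : ∀ j, ∃ i, H i j ≠ 0) {j : ZMod n} {d : Fin k → F} {e : F}
    (hd : ∀ l, d l ≠ 0 → j ∈ circIoc (a l) (b l) ∧ j ≠ b l)
    (h : ∑ l, d l • bcjrState G H a j l + e • H.col j = 0) : d = 0 ∧ e = 0 := by
  by_cases hd0 : d = 0
  · subst hd0
    obtain ⟨i, hi⟩ := hH j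
    simp only [Pi.zero_apply, zero_smul, Finset.sum_const_zero, zero_add] at h
    exact ⟨rfl, by simpa [hi] using congrFun h i⟩
  exfalso
  obtain ⟨l₀, hl₀, hmax⟩ := Finset.exists_max_image (Finset.univ.filter (d · ≠ 0))
    (fun l => (j - a l).val) (by simpa [Finset.Nonempty, funext_iff] using hd0)
  replace hl₀ : d l₀ ≠ 0 := by simpa using hl₀
  replace hmax : ∀ l, d l ≠ 0 → (j - a l).val ≤ (j - a l₀).val := fun l hl => hmax l (by simpa)
  obtain ⟨⟨hj1, hj2⟩, hjb⟩ := hd l₀ hl₀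
  set c : ZMod n → F := ∑ l, d l • (circIco (a l) j).indicator (G l) + e • Pi.single j 1
  have hc : H *ᵥ c = 0 := by
    simpa [c, mulVec_add, mulVec_sum, mulVec_smul, bcjrState_apply] using h
  have hsupp : ∀ t, c t ≠ 0 → (t - a l₀).val ≤ (j - a l₀).val := by
    intro t ht
    by_cases htj : t = j
    · rw [htj]
    have hsum : ∑ l, d l * (circIco (a l) j).indicator (G l) t ≠ 0 := by
      simpa [c, htj] using ht
    obtain ⟨l, -, hl⟩ := Finset.exists_ne_zero_of_sum_ne_zero hsum
    have hmem : t ∈ circIco (a l) j := by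
      by_contra hnot
      simp [hnot] at hl
    exact (circIco_subset_circIco (hmax l (left_ne_zero_of_mul hl)) hmem).le
  -- `a l₀` lies in no other window, since the starting points are distinct
  have hca : c (a l₀) = d l₀ * G l₀ (a l₀) := by
    have hl₀j : a l₀ ≠ j := by
      rintro hj
      rw [hj, sub_self, ZMod.val_zero] at hj1
      omega
    have hself : a l₀ ∈ circIco (a l₀) j := by
      simp only [circIco, Set.mem_ofPred_eq, sub_self, ZMod.val_zero]
      omega
    have hother : ∀ l ∈ Finset.univ, l ≠ l₀ →
        d l * (circIco (a l) j).indicator (G l) (a l₀) = 0 := by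
      intro l _ hl
      by_cases hdl : d l = 0
      · simp [hdl]
      have hnot : a l₀ ∉ circIco (a l) j := fun hmem => by
        have hle := (mem_circIco_iff.1 hmem).2
        have heq : j - a l₀ = j - a l := ZMod.val_injective n (le_antisymm hle (hmax l hdl))
        exact hl (ha (sub_right_inj.1 heq).symm)
      simp [hnot]
    simp [c, hl₀j, Finset.sum_eq_single l₀ hother, hself]
  have hlen := sub_val_le_of_mulVec_eq_zero (hchar l₀) hc
    (by rw [hca]; exact mul_ne_zero hl₀ (hspan l₀).1) hsupp
  have hne : (j - a l₀).val ≠ (b l₀ - a l₀).val := by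
    rwa [Ne, (ZMod.val_injective n).eq_iff, sub_left_inj]
  omega

lemma bcjrState_coeffs_add_one (hGH : G * Hᵀ = 0) (hspan : ∀ l, IsSpan (G l) (a l) (b l))
    (ha : Function.Injective a)
    (hchar : ∀ l, IsShortestSpanFrom H (a l) (b l))
    (hH : ∀ j, ∃ i, H i j ≠ 0) {j : ZMod n} {c c' : Fin k → F}
    (hc' : ∀ l, c' l ≠ 0 → j + 1 ∈ circIoc (a l) (b l))
    (h : ∑ l, c l • bcjrState G H a j l = ∑ l, c' l • bcjrState G H a (j + 1) l) :
    (∀ l, j ∈ circIoc (a l) (b l) → j ≠ b l → c' l = c l) ∧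
      ∑ l, (c' l + if b l = j then c l else 0) * G l j = 0 := by
  set d : Fin k → F := fun l => if j ∈ circIoc (a l) (b l) ∧ j ≠ b l then c' l - c l else 0
  have hterm : ∀ l, c' l • bcjrState G H a (j + 1) l - c l • bcjrState G H a j l =
      d l • bcjrState G H a j l + ((c' l + if b l = j then c l else 0) * G l j) • H.col j := by
    intro l
    rw [bcjrState_add_one_apply hGH]
    by_cases hbj : b l = j
    · subst hbj
      have hc'l : c' l = 0 := by
        by_contra hne
        exact add_one_notMem_circIoc _ _ (hc' l hne)
      simp only [d, hc'l, bcjrState_row_end hGH (hspan l), ne_eq, not_true_eq_false,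
        and_false, if_false, if_true]
      module
    by_cases hj : j ∈ circIoc (a l) (b l)
    · simp only [d, hj, hbj, Ne.symm hbj, ne_eq, not_false_eq_true, and_self, if_true, if_false]
      module
    · simp only [d, hj, hbj, bcjrState_row_eq_zero hGH (hspan l) hj, false_and, if_false]
      module
  have hsum : ∑ l, d l • bcjrState G H a j l +
      (∑ l, (c' l + if b l = j then c l else 0) * G l j) • H.col j = 0 := by
    rw [Finset.sum_smul, ← Finset.sum_add_distrib]
    simp_rw [← hterm]
    rw [Finset.sum_sub_distrib, h, sub_self]
  obtain ⟨hd, he⟩ := eq_zero_of_sum_smul_bcjrState_add_smul_eq_zero hspan ha hchar hH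
    (fun l hl => by by_contra hnot; exact hl (if_neg hnot)) hsum
  refine ⟨fun l hj hjb => ?_, he⟩
  simpa [d, hj, hjb, sub_eq_zero] using congrFun hd l

lemma exists_coeffs_of_mem_span_bcjrState (hGH : G * Hᵀ = 0)
    (hspan : ∀ l, IsSpan (G l) (a l) (b l)) {j : ZMod n} {w : Fin m → F}
    (hw : w ∈ Submodule.span F (Set.range (bcjrState G H a j))) :
    ∃ c : Fin k → F, (∀ l, c l ≠ 0 → j ∈ circIoc (a l) (b l)) ∧
      ∑ l, c l • bcjrState G H a j l = w := by
  obtain ⟨c, rfl⟩ := (Submodule.mem_span_range_iff_exists_fun F).1 hw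
  refine ⟨fun l => if j ∈ circIoc (a l) (b l) then c l else 0,
    fun l hl => by by_contra hnot; exact hl (if_neg hnot), Finset.sum_congr rfl fun l _ => ?_⟩
  by_cases hj : j ∈ circIoc (a l) (b l)
  · simp [hj]
  · simp [hj, bcjrState_row_eq_zero hGH (hspan l) hj]

lemma coeffs_eq_of_mem_circIoc (hGH : G * Hᵀ = 0) (hspan : ∀ l, IsSpan (G l) (a l) (b l))
    (ha : Function.Injective a) (hchar : ∀ l, IsShortestSpanFrom H (a l) (b l))
    (hH : ∀ j, ∃ i, H i j ≠ 0) {w : Fin m → F} {c : ZMod n → Fin k → F}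
    (hc_supp : ∀ j l, c j l ≠ 0 → j ∈ circIoc (a l) (b l))
    (hc : ∀ j, ∑ l, c j l • bcjrState G H a j l = w) {l : Fin k} {j : ZMod n}
    (hj : j ∈ circIoc (a l) (b l)) : c j l = c (a l + 1) l :=
  apply_eq_of_mem_circIoc (fun i => c i l) (fun i hi hib =>
    (bcjrState_coeffs_add_one hGH hspan ha hchar hH (hc_supp (i + 1))
      ((hc i).trans (hc (i + 1)).symm)).1 l hi hib) hj

lemma vecMul_coeffs_eq_zero (hGH : G * Hᵀ = 0) (hspan : ∀ l, IsSpan (G l) (a l) (b l))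
    (ha : Function.Injective a) (hchar : ∀ l, IsShortestSpanFrom H (a l) (b l))
    (hH : ∀ j, ∃ i, H i j ≠ 0) {w : Fin m → F} {c : ZMod n → Fin k → F}
    (hc_supp : ∀ j l, c j l ≠ 0 → j ∈ circIoc (a l) (b l))
    (hc : ∀ j, ∑ l, c j l • bcjrState G H a j l = w) :
    Matrix.vecMul (fun l => c (a l + 1) l) G = 0 := by
  have hconst : ∀ {l j}, j ∈ circIoc (a l) (b l) → c j l = c (a l + 1) l :=
    coeffs_eq_of_mem_circIoc hGH hspan ha hchar hH hc_supp hc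
  have hterm : ∀ t l, (c (t + 1) l + if b l = t then c t l else 0) * G l t =
      c (a l + 1) l * G l t := by
    intro t l
    by_cases hG0 : G l t = 0
    · simp [hG0]
    by_cases hbt : b l = t
    · subst hbt
      have hend : c (b l + 1) l = 0 := by
        by_contra hne
        exact add_one_notMem_circIoc _ _ (hc_supp _ l hne)
      have hab := ne_of_isSpan_of_mulVec_eq_zero (hspan l) (mulVec_row_eq_zero hGH l) hH
      simp [hend, hconst (right_mem_circIoc hab)]
    · simp [hbt, hconst (add_one_mem_circIoc ((hspan l).2.2 t hG0) (Ne.symm hbt))]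
  ext t
  rw [Pi.zero_apply, ← (bcjrState_coeffs_add_one hGH hspan ha hchar hH (hc_supp (t + 1))
    ((hc t).trans (hc (t + 1)).symm)).2]
  simp only [vecMul, dotProduct, hterm]

end Trellis

theorem stmt10_general (F : Type*) [Field F] (n k m : ℕ) [NeZero n]
    (G : Matrix (Fin k) (ZMod n) F) (H : Matrix (Fin m) (ZMod n) F)
    (hGH : G * H.transpose = 0) (hG : G.rank = k)
    (hsuppD : ∀ j : ZMod n, ∃ i, H i j ≠ 0)
    (a b : Fin k → ZMod n)
    (hspan : ∀ l, IsSpan (G l) (a l) (b l))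
    (ha : Function.Injective a)
    (hchar : ∀ l, ∀ c : ZMod n → F, (∀ i, ∑ j, c j * H i j = 0) → c ≠ 0 →
      ∀ b', IsSpan c (a l) b' → (b l - a l).val ≤ (b' - a l).val)
    (N : ZMod n → Matrix (Fin k) (Fin m) F)
    (hN0 : ∀ l c, N 0 l c =
      ∑ j ∈ Finset.univ.filter (fun j : ZMod n => (a l).val ≤ j.val), G l j * H c j)
    (hNrec : ∀ j : ZMod n, N (j + 1) = N j + Matrix.of (fun l c => G l j * H c j)) :
    (⨅ j : ZMod n, Submodule.span F (Set.range (N j))) = ⊥ := by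
  obtain rfl := bcjrState_eq hGH hN0 hNrec
  refine eq_bot_iff.2 fun w hw => ?_
  choose c hc_supp hc_sum using fun j =>
    exists_coeffs_of_mem_span_bcjrState hGH hspan ((Submodule.mem_iInf _).1 hw j)
  have hG_rows := Matrix.linearIndependent_rows_of_rank_eq_card (A := G) (by simpa using hG)
  have hμ : (fun l => c (a l + 1) l) = 0 :=
    Matrix.vecMul_injective_iff.2 hG_rows
      ((vecMul_coeffs_eq_zero hGH hspan ha hchar hsuppD hc_supp hc_sum).trans
        (Matrix.zero_vecMul G).symm)
  rw [Submodule.mem_bot, ← hc_sum 0]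
  refine Finset.sum_eq_zero fun l _ => ?_
  by_cases h0 : c 0 l = 0
  · simp [h0]
  · simp [coeffs_eq_of_mem_circIoc hGH hspan ha hchar hsuppD hc_supp hc_sum (hc_supp 0 l h0),
      congrFun hμ l]

/-- For a KV-trellis `T_{(G,H,S)}` of `C = ker Hᵀ` with BCJR state matrices `N_j`,
the intersection of the row spaces of all the `N_j` is zero. -/
theorem stmt10 (F : Type*) [Field F] (n k m : ℕ) [NeZero n]
    (G : Matrix (Fin k) (ZMod n) F) (H : Matrix (Fin m) (ZMod n) F)
    (hGH : G * H.transpose = 0) (hG : G.rank = k) (hH : H.rank = m)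
    (hsuppD : ∀ j : ZMod n, ∃ i, H i j ≠ 0)
    (a b : Fin k → ZMod n)
    (hspan : ∀ l, IsSpan (G l) (a l) (b l))
    (ha : Function.Injective a) (hb : Function.Injective b)
    (hchar : ∀ l, ∀ c : ZMod n → F, (∀ i, ∑ j, c j * H i j = 0) → c ≠ 0 →
      ∀ b', IsSpan c (a l) b' → (b l - a l).val ≤ (b' - a l).val)
    (N : ZMod n → Matrix (Fin k) (Fin m) F)
    (hN0 : ∀ l c, N 0 l c =
      ∑ j ∈ Finset.univ.filter (fun j : ZMod n => (a l).val ≤ j.val), G l j * H c j)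
    (hNrec : ∀ j : ZMod n, N (j + 1) = N j + Matrix.of (fun l c => G l j * H c j)) :
    (⨅ j : ZMod n, Submodule.span F (Set.range (N j))) = ⊥ :=
  stmt10_general F n k m G H hGH hG hsuppD a b hspan ha hchar N hN0 hNrec
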